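/- Let A and B be real symmetric positive definite d×d matrices, suppose A has d pairwise distinct eigenvalues, and let v₁, …, v_d be a corresponding orthonormal basis of eigenvectors of A. Then M(A, B) = Σ_{i=1}^d √( (v_iᵀ B v_i) · (v_iᵀ B⁻¹ v_i) ) − d. -/

import Mathlib

open Matrix

/-- Eigenspace of a `d × d` real matrix `A` for the (potential) eigenvalue `μ`. -/
noncomputable def eigSp {d : ℕ} (A : Matrix (Fin d) (Fin d) ℝ) (μ : ℝ) :
    Submodule ℝ (Fin d → ℝ) :=
  Module.End.eigenspace A.mulVecLin μ

/-- `A` is aligned with `B` if every eigenspace of `B` is contained in an eigenspace of `A`. -/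
def IsAligned {d : ℕ} (A B : Matrix (Fin d) (Fin d) ℝ) : Prop :=
  ∀ μ : ℝ, ∃ ν : ℝ, eigSp B μ ≤ eigSp A ν

/-- The misalignment `M(A, B)`: the infimum, over symmetric positive definite matrices `S`
aligned with `A`, of `(1/2) · tr(S⁻¹ B + B⁻¹ S) − d`. -/
noncomputable def misalignment {d : ℕ} (A B : Matrix (Fin d) (Fin d) ℝ) : ℝ :=
  sInf {m : ℝ | ∃ S : Matrix (Fin d) (Fin d) ℝ,
    S.PosDef ∧ IsAligned S A ∧ m = (1 / 2) * (S⁻¹ * B + B⁻¹ * S).trace - d}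

/-! Let `W` be the orthogonal matrix with rows `vᵢ`, so that `A = Wᵀ diag(μ) W`. Since the `μᵢ`
are distinct, the eigenspaces of `A` are the lines `ℝ vᵢ`, hence the positive definite matrices
aligned with `A` are exactly the `S = Wᵀ diag(σ) W` with all `σᵢ > 0`. For these,
`½ tr(S⁻¹B + B⁻¹S) = ∑ ½ (σᵢ⁻¹ bᵢ + σᵢ cᵢ)` with `bᵢ = vᵢᵀ B vᵢ` and `cᵢ = vᵢᵀ B⁻¹ vᵢ`, and by
AM–GM each summand is at least `√(bᵢ cᵢ)`, with equality at `σᵢ = √bᵢ / √cᵢ`. -/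

namespace Matrix

variable {n : Type*} [Fintype n] [DecidableEq n] {W S : Matrix n n ℝ}

lemma mulVec_row_of_mul_transpose_eq_one (hW : W * Wᵀ = 1) (i : n) :
    W *ᵥ W i = Pi.single i 1 := by
  ext j
  simpa [mulVec, mul_apply, dotProduct, one_apply, Pi.single_apply, mul_comm]
    using congrFun (congrFun hW j) i

lemma conj_diagonal_mulVec_row (hW : W * Wᵀ = 1) (s : n → ℝ) (i : n) :
    (Wᵀ * diagonal s * W) *ᵥ W i = s i • W i := by
  rw [← mulVec_mulVec, mulVec_row_of_mul_transpose_eq_one hW, ← mulVec_mulVec,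
    diagonal_mulVec_single, mul_one, mulVec_single]
  ext j
  simp [mul_comm]

lemma eq_conj_diagonal_of_mulVec_row (hW : W * Wᵀ = 1) {s : n → ℝ}
    (hS : ∀ i, S *ᵥ W i = s i • W i) : S = Wᵀ * diagonal s * W := by
  have hcols : S * Wᵀ = Wᵀ * diagonal s := by
    ext j i
    rw [mul_diagonal]
    simpa [mulVec, dotProduct, mul_apply, mul_comm] using congrFun (hS i) j
  calc S = S * Wᵀ * W := by
        rw [Matrix.mul_assoc, mul_eq_one_comm.mp hW, Matrix.mul_one]
    _ = Wᵀ * diagonal s * W := by rw [hcols]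

lemma inv_conj_diagonal (hW : W * Wᵀ = 1) {s : n → ℝ} (hs : ∀ i, s i ≠ 0) :
    (Wᵀ * diagonal s * W)⁻¹ = Wᵀ * diagonal s⁻¹ * W := by
  refine inv_eq_left_inv ?_
  have hss : diagonal s⁻¹ * diagonal s = 1 := by
    rw [diagonal_mul_diagonal, ← diagonal_one]
    exact congrArg diagonal (funext fun i => inv_mul_cancel₀ (hs i))
  calc Wᵀ * diagonal s⁻¹ * W * (Wᵀ * diagonal s * W)
      = Wᵀ * diagonal s⁻¹ * (W * Wᵀ) * diagonal s * W := by simp only [Matrix.mul_assoc]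
    _ = 1 := by
      rw [hW, Matrix.mul_one, Matrix.mul_assoc Wᵀ, hss, Matrix.mul_one,
        mul_eq_one_comm.mp hW]

lemma trace_conj_diagonal_mul (W : Matrix n n ℝ) (s : n → ℝ) (M : Matrix n n ℝ) :
    (Wᵀ * diagonal s * W * M).trace = ∑ i, s i * (W i ⬝ᵥ M *ᵥ W i) := by
  rw [Matrix.mul_assoc, Matrix.mul_assoc, trace_mul_comm, Matrix.mul_assoc]
  simp only [trace, diag_apply, diagonal_mul]
  simp only [mul_mul_apply, transpose_transpose]

lemma posDef_conj_diagonal (hW : W * Wᵀ = 1) {s : n → ℝ} (hs : ∀ i, 0 < s i) :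
    (Wᵀ * diagonal s * W).PosDef := by
  have hinj : Function.Injective W.mulVec := fun x y hxy => by
    simpa [mul_eq_one_comm.mp hW] using congrArg (Wᵀ *ᵥ ·) hxy
  simpa using (posDef_diagonal_iff.mpr hs).conjTranspose_mul_mul_same hinj

omit [DecidableEq n] in
lemma PosDef.pos_of_mulVec_eq_smul (hS : S.PosDef) {x : n → ℝ} (hx : x ≠ 0) {σ : ℝ}
    (h : S *ᵥ x = σ • x) : 0 < σ := by
  have := hS.dotProduct_mulVec_pos hx
  rw [h, dotProduct_smul, smul_eq_mul] at this
  exact pos_of_mul_pos_left this (dotProduct_star_self_pos_iff.mpr hx).le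

lemma row_ne_zero_of_mul_transpose_eq_one (hW : W * Wᵀ = 1) (i : n) : W i ≠ 0 := fun h => by
  simpa [h] using congrFun (mulVec_row_of_mul_transpose_eq_one hW i) i

lemma conj_mulVec_transpose_mulVec (hW : W * Wᵀ = 1) (D : Matrix n n ℝ) (y : n → ℝ) :
    (Wᵀ * D * W) *ᵥ (Wᵀ *ᵥ y) = Wᵀ *ᵥ (D *ᵥ y) := by
  rw [mulVec_mulVec, Matrix.mul_assoc, Matrix.mul_assoc, hW, Matrix.mul_one, ← mulVec_mulVec]

lemma half_trace_conj_diagonal (hW : W * Wᵀ = 1) {σ : n → ℝ} (hσ : ∀ i, σ i ≠ 0)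
    (B : Matrix n n ℝ) :
    (1 / 2) * ((Wᵀ * diagonal σ * W)⁻¹ * B + B⁻¹ * (Wᵀ * diagonal σ * W)).trace
      = ∑ i, (1 / 2) * ((σ i)⁻¹ * (W i ⬝ᵥ B *ᵥ W i) + σ i * (W i ⬝ᵥ B⁻¹ *ᵥ W i)) := by
  rw [inv_conj_diagonal hW hσ, trace_add, trace_mul_comm B⁻¹, trace_conj_diagonal_mul,
    trace_conj_diagonal_mul, ← Finset.sum_add_distrib, Finset.mul_sum]
  rfl

end Matrix

section Alignment

variable {d : ℕ} {W S A : Matrix (Fin d) (Fin d) ℝ}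

lemma mem_eigSp_iff {μ : ℝ} {x : Fin d → ℝ} : x ∈ eigSp A μ ↔ A *ᵥ x = μ • x := by
  simp [eigSp]

lemma IsAligned.exists_mulVec_eq_smul (h : IsAligned S A) {x : Fin d → ℝ} {μ : ℝ}
    (hx : A *ᵥ x = μ • x) : ∃ σ : ℝ, S *ᵥ x = σ • x := by
  obtain ⟨ν, hν⟩ := h μ
  exact ⟨ν, mem_eigSp_iff.mp (hν (mem_eigSp_iff.mpr hx))⟩

lemma isAligned_conj_diagonal (hW : W * Wᵀ = 1) {μ : Fin d → ℝ} (hμ : Function.Injective μ)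
    (s : Fin d → ℝ) : IsAligned (Wᵀ * diagonal s * W) (Wᵀ * diagonal μ * W) := by
  intro μ'
  refine ⟨if h : ∃ i, μ i = μ' then s h.choose else 0, fun x hx => ?_⟩
  rw [mem_eigSp_iff] at hx ⊢
  obtain ⟨y, rfl⟩ : ∃ y, Wᵀ *ᵥ y = x :=
    ⟨W *ᵥ x, by rw [mulVec_mulVec, mul_eq_one_comm.mp hW, one_mulVec]⟩
  have hWinj : Function.Injective (Wᵀ *ᵥ ·) := fun a b hab => by
    simpa [mulVec_mulVec, hW] using congrArg (W *ᵥ ·) hab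
  rw [conj_mulVec_transpose_mulVec hW, ← mulVec_smul] at hx ⊢
  have hy : ∀ i, μ i * y i = μ' * y i := fun i => by
    simpa [mulVec_diagonal] using congrFun (hWinj hx) i
  congr 1
  ext i
  rw [mulVec_diagonal]
  by_cases hyi : y i = 0
  · simp [hyi]
  · obtain rfl : μ i = μ' := mul_right_cancel₀ hyi (hy i)
    have h : ∃ j, μ j = μ i := ⟨i, rfl⟩
    simp [h, hμ h.choose_spec]

end Alignment

lemma sqrt_mul_le_half_inv_mul_add_mul {b c σ : ℝ} (hb : 0 ≤ b) (hc : 0 ≤ c) (hσ : 0 < σ) :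
    √(b * c) ≤ (1 / 2) * (σ⁻¹ * b + σ * c) := by
  have hprod : √(σ⁻¹ * b) * √(σ * c) = √(b * c) := by
    rw [← Real.sqrt_mul (by positivity)]
    congr 1
    field_simp
  nlinarith [sq_nonneg (√(σ⁻¹ * b) - √(σ * c)), Real.sq_sqrt (by positivity : 0 ≤ σ⁻¹ * b),
    Real.sq_sqrt (by positivity : 0 ≤ σ * c)]

lemma half_inv_mul_add_mul_sqrt_div_sqrt {b c : ℝ} (hb : 0 < b) (hc : 0 < c) :
    (1 / 2) * ((√b / √c)⁻¹ * b + (√b / √c) * c) = √(b * c) := by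
  have hb' : 0 < √b := Real.sqrt_pos.mpr hb
  have hc' : 0 < √c := Real.sqrt_pos.mpr hc
  rw [Real.sqrt_mul hb.le]
  field_simp
  nlinarith [Real.sq_sqrt hb.le, Real.sq_sqrt hc.le]

lemma isLeast_sum_half_inv_mul_add_mul {ι : Type*} [Fintype ι] {b c : ι → ℝ}
    (hb : ∀ i, 0 < b i) (hc : ∀ i, 0 < c i) :
    IsLeast ((fun σ : ι → ℝ => ∑ i, (1 / 2) * ((σ i)⁻¹ * b i + σ i * c i)) ''
      {σ | ∀ i, 0 < σ i}) (∑ i, √(b i * c i)) := by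
  refine ⟨⟨fun i => √(b i) / √(c i), fun i => by have := hb i; have := hc i; positivity,
    Finset.sum_congr rfl fun i _ => half_inv_mul_add_mul_sqrt_div_sqrt (hb i) (hc i)⟩, ?_⟩
  rintro _ ⟨σ, hσ, rfl⟩
  exact Finset.sum_le_sum fun i _ =>
    sqrt_mul_le_half_inv_mul_add_mul (hb i).le (hc i).le (hσ i)

lemma misalignment_conj_diagonal {d : ℕ} {W : Matrix (Fin d) (Fin d) ℝ} (hW : W * Wᵀ = 1)
    {μ : Fin d → ℝ} (hμ : Function.Injective μ) (B : Matrix (Fin d) (Fin d) ℝ) :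
    misalignment (Wᵀ * diagonal μ * W) B = sInf ((fun σ : Fin d → ℝ =>
      ∑ i, (1 / 2) * ((σ i)⁻¹ * (W i ⬝ᵥ B *ᵥ W i) + σ i * (W i ⬝ᵥ B⁻¹ *ᵥ W i)) - d) ''
        {σ | ∀ i, 0 < σ i}) := by
  rw [misalignment]
  congr 1
  ext m
  constructor
  · rintro ⟨S, hS, hSA, rfl⟩
    choose σ hσ using fun i => hSA.exists_mulVec_eq_smul (conj_diagonal_mulVec_row hW μ i)
    have hσpos : ∀ i, 0 < σ i := fun i =>
      hS.pos_of_mulVec_eq_smul (row_ne_zero_of_mul_transpose_eq_one hW i) (hσ i)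
    obtain rfl := eq_conj_diagonal_of_mulVec_row hW hσ
    exact ⟨σ, hσpos, by rw [half_trace_conj_diagonal hW fun i => (hσpos i).ne']⟩
  · rintro ⟨σ, hσ, rfl⟩
    exact ⟨_, posDef_conj_diagonal hW hσ, isAligned_conj_diagonal hW hμ σ,
      by rw [half_trace_conj_diagonal hW fun i => (hσ i).ne']⟩

theorem misalignment_eq_sum_sqrt_of_distinct_eigenvalues_general {d : ℕ}
    (A B : Matrix (Fin d) (Fin d) ℝ) (hB : B.PosDef)
    (μ : Fin d → ℝ) (hμ : Function.Injective μ)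
    (v : Fin d → (Fin d → ℝ))
    (hon : ∀ i j, v i ⬝ᵥ v j = if i = j then (1 : ℝ) else 0)
    (hev : ∀ i, A.mulVec (v i) = μ i • v i) :
    misalignment A B
      = (∑ i, Real.sqrt ((v i ⬝ᵥ B.mulVec (v i)) * (v i ⬝ᵥ B⁻¹.mulVec (v i)))) - d := by
  set W : Matrix (Fin d) (Fin d) ℝ := of v
  have hW : W * Wᵀ = 1 := by
    ext i j
    simpa [W, mul_apply, dotProduct, one_apply] using hon i j
  have hquad_pos : ∀ {M : Matrix (Fin d) (Fin d) ℝ}, M.PosDef → ∀ i, 0 < v i ⬝ᵥ M *ᵥ v i :=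
    fun hM i => by
      simpa using hM.dotProduct_mulVec_pos (x := v i) (row_ne_zero_of_mul_transpose_eq_one hW i)
  have hleast := Monotone.map_isLeast (f := (· - (d : ℝ))) (fun _ _ h => sub_le_sub_right h _)
    (isLeast_sum_half_inv_mul_add_mul (hquad_pos hB) (hquad_pos hB.inv))
  rw [Set.image_image] at hleast
  rw [eq_conj_diagonal_of_mulVec_row hW hev, misalignment_conj_diagonal hW hμ]
  exact hleast.csInf_eq

/-- If `A` is positive definite with `d` pairwise distinct eigenvalues and
`v 0, …, v (d-1)` is a corresponding orthonormal basis of eigenvectors of `A`, then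
`M(A, B) = ∑ i, √((vᵢᵀ B vᵢ) · (vᵢᵀ B⁻¹ vᵢ)) − d` for every positive definite `B`. -/
theorem misalignment_eq_sum_sqrt_of_distinct_eigenvalues {d : ℕ}
    (A B : Matrix (Fin d) (Fin d) ℝ) (hA : A.PosDef) (hB : B.PosDef)
    (μ : Fin d → ℝ) (hμ : Function.Injective μ)
    (v : Fin d → (Fin d → ℝ))
    (hon : ∀ i j, v i ⬝ᵥ v j = if i = j then (1 : ℝ) else 0)
    (hev : ∀ i, A.mulVec (v i) = μ i • v i) :
    misalignment A B
      = (∑ i, Real.sqrt ((v i ⬝ᵥ B.mulVec (v i)) * (v i ⬝ᵥ B⁻¹.mulVec (v i)))) - d :=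
  misalignment_eq_sum_sqrt_of_distinct_eigenvalues_general A B hB μ hμ v hon hev
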